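/- (Dulac exit point asymptotics, incoming coordinate.) Assume Δ > 0 and condition (condL), and fix ζ₀, η > 0. Define ξ₀(η) := c₂^{−1/u} · η^{−a₂/b₂} · (∫₀^∞ Φ(M) dM)^{β₂}. Then for every ε > 0 there exists T₀ > 0 such that whenever T ≥ T₀ and (ξ, ω) is admissible at time T, one has |ξ · T^{β₂} − ξ₀(η)| < ε. -/

import Mathlib

/-!
Under (condL), `J(x, y) = x ^ u * y ^ v * (c₀ x² + c₁ x y + c₂ y²)` is a first integral of `X`,
and the slope `z = y / x` obeys `z' = -z (c₀ x² + c₁ x y + c₂ y²)`. Eliminating `x` through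
`J = h` turns the transit time into `T = h ^ (-2 / (u + v + 2)) * ∫_{ω/ζ₀}^{η/ξ} Φ`. As that
integral is at most `∫₀^∞ Φ`, large `T` forces `h → 0`, hence `ξ → 0` and `ω → 0`, so the integral
tends to `∫₀^∞ Φ`; solving the time formula for `ξ * T ^ β₂` gives the limit `ξ₀(η)`.
-/

open MeasureTheory Set Filter Topology

/-- `(ξ, ω)` is admissible at time `T` (for entry height `η` and exit abscissa `ζ₀`):
there is a positive solution of the cubic vector field on `[0,T]` from `(ξ,η)` to `(ζ₀,ω)`. -/
def DulacAdmissible (a₀ a₁ a₂ b₀ b₁ b₂ ζ₀ η T ξ ω : ℝ) : Prop :=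
  0 < ξ ∧ 0 < ω ∧
  ∃ x y : ℝ → ℝ,
    (∀ t ∈ Set.Icc (0 : ℝ) T, 0 < x t ∧ 0 < y t) ∧
    (∀ t ∈ Set.Icc (0 : ℝ) T,
      HasDerivAt x (x t * (a₀ * x t ^ 2 + a₁ * x t * y t + a₂ * y t ^ 2)) t ∧
      HasDerivAt y (-(y t * (b₀ * x t ^ 2 + b₁ * x t * y t + b₂ * y t ^ 2))) t) ∧
    x 0 = ξ ∧ y 0 = η ∧ x T = ζ₀ ∧ y T = ω

section QuadraticForm

variable {c₀ c₁ c₂ : ℝ}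

lemma mul_sq_le_quadForm_left (hc₂ : 0 < c₂) (x y : ℝ) :
    (4 * c₀ * c₂ - c₁ ^ 2) / (4 * c₂) * x ^ 2 ≤ c₀ * x ^ 2 + c₁ * x * y + c₂ * y ^ 2 := by
  rw [div_mul_eq_mul_div, div_le_iff₀ (by positivity)]
  nlinarith [sq_nonneg (c₁ * x + 2 * c₂ * y)]

lemma mul_sq_le_quadForm_right (hc₀ : 0 < c₀) (x y : ℝ) :
    (4 * c₀ * c₂ - c₁ ^ 2) / (4 * c₀) * y ^ 2 ≤ c₀ * x ^ 2 + c₁ * x * y + c₂ * y ^ 2 := by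
  rw [div_mul_eq_mul_div, div_le_iff₀ (by positivity)]
  nlinarith [sq_nonneg (2 * c₀ * x + c₁ * y)]

lemma pos_of_discrim_neg (hc₀ : 0 < c₀) (hdisc : c₁ ^ 2 < 4 * c₀ * c₂) : 0 < c₂ :=
  pos_of_mul_pos_right (by nlinarith [sq_nonneg c₁]) (by positivity : (0:ℝ) ≤ 4 * c₀)

lemma quadForm_pos (hc₀ : 0 < c₀) (hdisc : c₁ ^ 2 < 4 * c₀ * c₂) {x y : ℝ} (hy : 0 < y) :
    0 < c₀ * x ^ 2 + c₁ * x * y + c₂ * y ^ 2 :=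
  (mul_pos (div_pos (by linarith) (by positivity)) (pow_pos hy 2)).trans_le
    (mul_sq_le_quadForm_right hc₀ x y)

lemma quadPoly_pos (hc₀ : 0 < c₀) (hdisc : c₁ ^ 2 < 4 * c₀ * c₂) (M : ℝ) :
    0 < c₀ + c₁ * M + c₂ * M ^ 2 := by
  have hc₂ := pos_of_discrim_neg hc₀ hdisc
  have hm : 0 < (4 * c₀ * c₂ - c₁ ^ 2) / (4 * c₂) := div_pos (by linarith) (by positivity)
  simpa using hm.trans_le (by simpa using mul_sq_le_quadForm_left (c₀ := c₀) (c₁ := c₁) hc₂ 1 M)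

lemma continuousOn_rpow_mul_quadPoly_rpow (hc₀ : 0 < c₀) (hdisc : c₁ ^ 2 < 4 * c₀ * c₂)
    (p q : ℝ) :
    ContinuousOn (fun M : ℝ => M ^ p * (c₀ + c₁ * M + c₂ * M ^ 2) ^ q) (Ioi 0) := fun M hM =>
  ((Real.continuousAt_rpow_const M p (Or.inl hM.ne')).mul
    ((by fun_prop : Continuous fun M : ℝ => c₀ + c₁ * M + c₂ * M ^ 2).continuousAt.rpow_const
      (Or.inl (quadPoly_pos hc₀ hdisc M).ne'))).continuousWithinAt

lemma integrableOn_rpow_mul_quadPoly_rpow (hc₀ : 0 < c₀) (hdisc : c₁ ^ 2 < 4 * c₀ * c₂)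
    {p q : ℝ} (hp : -1 < p) (hq : q ≤ 0) (hpq : p + 2 * q < -1) :
    IntegrableOn (fun M : ℝ => M ^ p * (c₀ + c₁ * M + c₂ * M ^ 2) ^ q) (Ioi 0) := by
  have hc₂ := pos_of_discrim_neg hc₀ hdisc
  set m₀ := (4 * c₀ * c₂ - c₁ ^ 2) / (4 * c₂)
  set m₂ := (4 * c₀ * c₂ - c₁ ^ 2) / (4 * c₀)
  have hm₀ : 0 < m₀ := div_pos (by linarith) (by positivity)
  have hm₂ : 0 < m₂ := div_pos (by linarith) (by positivity)
  have hcont := continuousOn_rpow_mul_quadPoly_rpow hc₀ hdisc p q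
  have hnear : IntegrableOn (fun M : ℝ => M ^ p * (c₀ + c₁ * M + c₂ * M ^ 2) ^ q) (Ioc 0 1) := by
    refine Integrable.mono' (((intervalIntegral.intervalIntegrable_rpow' hp).1).const_mul (m₀ ^ q))
      ((hcont.mono Ioc_subset_Ioi_self).aestronglyMeasurable measurableSet_Ioc) ?_
    refine (ae_restrict_iff' measurableSet_Ioc).2 (ae_of_all _ fun M hM => ?_)
    have hC : m₀ ≤ c₀ + c₁ * M + c₂ * M ^ 2 := by
      simpa [m₀] using mul_sq_le_quadForm_left (c₀ := c₀) (c₁ := c₁) hc₂ 1 M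
    have hMp := Real.rpow_nonneg hM.1.le p
    rw [Real.norm_of_nonneg (mul_nonneg hMp (Real.rpow_nonneg (hm₀.le.trans hC) q)),
      mul_comm (m₀ ^ q)]
    exact mul_le_mul_of_nonneg_left (Real.rpow_le_rpow_of_nonpos hm₀ hC hq) hMp
  have hfar : IntegrableOn (fun M : ℝ => M ^ p * (c₀ + c₁ * M + c₂ * M ^ 2) ^ q) (Ioi 1) := by
    refine Integrable.mono' ((integrableOn_Ioi_rpow_of_lt hpq one_pos).const_mul (m₂ ^ q))
      ((hcont.mono (Ioi_subset_Ioi zero_le_one)).aestronglyMeasurable measurableSet_Ioi) ?_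
    refine (ae_restrict_iff' measurableSet_Ioi).2 (ae_of_all _ fun M (hM : 1 < M) => ?_)
    have hM : 0 < M := one_pos.trans hM
    have hC : m₂ * M ^ 2 ≤ c₀ + c₁ * M + c₂ * M ^ 2 := by
      simpa [m₂] using mul_sq_le_quadForm_right (c₁ := c₁) (c₂ := c₂) hc₀ 1 M
    have hsplit : m₂ ^ q * M ^ (p + 2 * q) = M ^ p * (m₂ * M ^ 2) ^ q := by
      rw [Real.mul_rpow hm₂.le (by positivity), Real.rpow_add hM, ← Real.rpow_natCast M 2,
        ← Real.rpow_mul hM.le]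
      push_cast
      ring
    have hC₀ := quadPoly_pos hc₀ hdisc M
    rw [Real.norm_of_nonneg (by positivity), hsplit]
    refine mul_le_mul_of_nonneg_left ?_ (by positivity)
    exact Real.rpow_le_rpow_of_nonpos (by positivity) hC hq
  rw [← Ioc_union_Ioi_eq_Ioi zero_le_one]
  exact hnear.union hfar

end QuadraticForm

lemma tendsto_nhds_zero_of_rpow_le {ι : Type*} {l : Filter ι} {f g : ι → ℝ} {r : ℝ} (hr : 0 < r)
    (hg : Tendsto g l (𝓝 0)) (hfg : ∀ᶠ i in l, 0 ≤ f i ∧ f i ^ r ≤ g i) :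
    Tendsto f l (𝓝 0) := by
  have hg' : Tendsto (fun i => g i ^ r⁻¹) l (𝓝 0) := by
    have := (Real.continuousAt_rpow_const 0 r⁻¹ (Or.inr (inv_pos.2 hr).le)).tendsto.comp hg
    rwa [Real.zero_rpow (inv_ne_zero hr.ne')] at this
  refine tendsto_of_tendsto_of_tendsto_of_le_of_le' tendsto_const_nhds hg'
    (hfg.mono fun i hi => hi.1) (hfg.mono fun i hi => ?_)
  exact (Real.le_rpow_inv_iff_of_pos hi.1 ((Real.rpow_nonneg hi.1 r).trans hi.2) hr).2 hi.2

lemma tendsto_setIntegral_Ioc_of_tendsto {ι E : Type*} [NormedAddCommGroup E] [NormedSpace ℝ E]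
    {l : Filter ι} [l.IsCountablyGenerated] {f : ℝ → E} {A : ℝ} {a b : ι → ℝ}
    (hf : IntegrableOn f (Ioi A)) (ha : Tendsto a l (𝓝 A)) (hA : ∀ᶠ i in l, A ≤ a i)
    (hb : Tendsto b l atTop) :
    Tendsto (fun i => ∫ x in Ioc (a i) (b i), f x) l (𝓝 (∫ x in Ioi A, f x)) := by
  have hcover := (aecover_Ioi_of_Ioi (μ := volume) ha).inter (aecover_Iic hb)
  refine (hcover.integral_tendsto_of_countably_generated hf).congr' (hA.mono fun i hi => ?_)
  rw [Ioi_inter_Iic, Measure.restrict_restrict_of_subset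
    (Ioc_subset_Ioi_self.trans (Ioi_subset_Ioi hi))]

lemma eq_intervalIntegral_of_hasDerivAt_mul_eq_neg_one {z z' g : ℝ → ℝ} {T : ℝ} (hT : 0 ≤ T)
    (hz : ∀ t ∈ Icc 0 T, HasDerivAt z (z' t) t) (hg : ContinuousOn g (z '' Icc 0 T))
    (hzg : ∀ t ∈ Icc 0 T, z' t * g (z t) = -1) :
    T = ∫ M in z T..z 0, g M := by
  rw [← uIcc_of_le hT] at hz hg hzg
  have hzc : ContinuousOn z (uIcc 0 T) := fun t ht => (hz t ht).continuousAt.continuousWithinAt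
  have hchange := intervalIntegral.integral_deriv_smul_comp''' hzc
    (fun t ht => (hz t (Ioo_subset_Icc_self ht)).hasDerivWithinAt)
    (hg.mono (image_mono Ioo_subset_Icc_self))
    (hg.integrableOn_compact (isCompact_uIcc.image_of_continuousOn hzc))
    ((integrableOn_const (C := (-1 : ℝ)) measure_Icc_lt_top.ne).congr_fun
      (fun t ht => (hzg t ht).symm) measurableSet_uIcc)
  rw [intervalIntegral.integral_symm, ← hchange,
    intervalIntegral.integral_congr (g := fun _ => (-1 : ℝ)) fun t ht => by simpa using hzg t ht]
  simp

lemma inv_mul_sq_mul_eq_rpow {X Z W H σ v : ℝ} (hX : 0 < X) (hZ : 0 < Z) (hW : 0 < W)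
    (hσ : σ ≠ 0) (h : X ^ σ * Z ^ v * W = H) :
    (Z * X ^ 2 * W)⁻¹ = H ^ (-(2 / σ)) * Z ^ (2 * v / σ - 1) * W ^ (2 / σ - 1) := by
  have hH : 0 < H := h ▸ by positivity
  have hlog : Real.log H = σ * Real.log X + v * Real.log Z + Real.log W := by
    rw [← h, Real.log_mul (by positivity) hW.ne', Real.log_mul (by positivity) (by positivity),
      Real.log_rpow hX, Real.log_rpow hZ]
  apply Real.log_injOn_pos (Set.mem_Ioi.2 (by positivity)) (Set.mem_Ioi.2 (by positivity))
  rw [Real.log_inv, Real.log_mul (by positivity) hW.ne', Real.log_mul hZ.ne' (by positivity),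
    Real.log_mul (by positivity) (by positivity), Real.log_mul (by positivity) (by positivity),
    Real.log_rpow hH, Real.log_rpow hZ, Real.log_rpow hW, Real.log_pow]
  push_cast
  field_simp
  linear_combination 2 * hlog

noncomputable def firstIntegral (c₀ c₁ c₂ u v x y : ℝ) : ℝ :=
  x ^ u * y ^ v * (c₀ * x ^ 2 + c₁ * x * y + c₂ * y ^ 2)

section CubicField

variable {a₀ a₁ a₂ b₀ b₁ b₂ c₀ c₁ c₂ Δ u v : ℝ}

lemma mul_sq_le_firstIntegral_left (hc₂ : 0 < c₂) {x y : ℝ} (hx : 0 ≤ x) (hy : 0 ≤ y) :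
    x ^ u * y ^ v * ((4 * c₀ * c₂ - c₁ ^ 2) / (4 * c₂) * x ^ 2) ≤
      firstIntegral c₀ c₁ c₂ u v x y :=
  mul_le_mul_of_nonneg_left (mul_sq_le_quadForm_left hc₂ x y) (by positivity)

lemma mul_sq_le_firstIntegral_right (hc₀ : 0 < c₀) {x y : ℝ} (hx : 0 ≤ x) (hy : 0 ≤ y) :
    x ^ u * y ^ v * ((4 * c₀ * c₂ - c₁ ^ 2) / (4 * c₀) * y ^ 2) ≤
      firstIntegral c₀ c₁ c₂ u v x y :=
  mul_le_mul_of_nonneg_left (mul_sq_le_quadForm_right hc₀ x y) (by positivity)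

lemma tendsto_nhds_zero_of_firstIntegral_left {ι : Type*} {l : Filter ι} {ξ : ι → ℝ} {η : ℝ}
    (hc₀ : 0 < c₀) (hdisc : c₁ ^ 2 < 4 * c₀ * c₂) (hu : 0 < u) (hη : 0 < η)
    (hξ : ∀ᶠ i in l, 0 < ξ i) (hJ : Tendsto (fun i => firstIntegral c₀ c₁ c₂ u v (ξ i) η) l (𝓝 0)) :
    Tendsto ξ l (𝓝 0) := by
  have hm : 0 < (4 * c₀ * c₂ - c₁ ^ 2) / (4 * c₀) := div_pos (by linarith) (by positivity)
  have hJ' := hJ.div_const (η ^ v * ((4 * c₀ * c₂ - c₁ ^ 2) / (4 * c₀) * η ^ 2))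
  rw [zero_div] at hJ'
  refine tendsto_nhds_zero_of_rpow_le hu hJ' (hξ.mono fun i hξ => ?_)
  refine ⟨hξ.le, (le_div_iff₀ (by positivity)).2 ?_⟩
  rw [← mul_assoc]
  exact mul_sq_le_firstIntegral_right hc₀ hξ.le hη.le

lemma tendsto_nhds_zero_of_firstIntegral_right {ι : Type*} {l : Filter ι} {ζ : ℝ} {ω : ι → ℝ}
    (hc₀ : 0 < c₀) (hdisc : c₁ ^ 2 < 4 * c₀ * c₂) (hv : 0 < v) (hζ : 0 < ζ)
    (hω : ∀ᶠ i in l, 0 < ω i) (hJ : Tendsto (fun i => firstIntegral c₀ c₁ c₂ u v ζ (ω i)) l (𝓝 0)) :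
    Tendsto ω l (𝓝 0) := by
  have hc₂ := pos_of_discrim_neg hc₀ hdisc
  have hm : 0 < (4 * c₀ * c₂ - c₁ ^ 2) / (4 * c₂) := div_pos (by linarith) (by positivity)
  have hJ' := hJ.div_const (ζ ^ u * ((4 * c₀ * c₂ - c₁ ^ 2) / (4 * c₂) * ζ ^ 2))
  rw [zero_div] at hJ'
  refine tendsto_nhds_zero_of_rpow_le hv hJ' (hω.mono fun i hω => ?_)
  refine ⟨hω.le, (le_div_iff₀ (by positivity)).2 ?_⟩
  rw [mul_left_comm, ← mul_assoc]
  exact mul_sq_le_firstIntegral_left hc₂ hζ.le hω.le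

lemma firstIntegral_pos (hc₀ : 0 < c₀) (hdisc : c₁ ^ 2 < 4 * c₀ * c₂) {x y : ℝ} (hx : 0 < x)
    (hy : 0 < y) : 0 < firstIntegral c₀ c₁ c₂ u v x y := by
  have := quadForm_pos hc₀ hdisc (x := x) hy
  unfold firstIntegral
  positivity

lemma firstIntegral_eq_rpow_mul_slope {x y : ℝ} (hx : 0 < x) (hy : 0 < y) :
    firstIntegral c₀ c₁ c₂ u v x y =
      x ^ (u + v + 2) * (y / x) ^ v * (c₀ + c₁ * (y / x) + c₂ * (y / x) ^ 2) := by
  unfold firstIntegral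
  rw [Real.rpow_add hx, Real.rpow_add hx, Real.div_rpow hy.le hx.le, Real.rpow_two]
  field_simp

lemma mul_firstIntegral_rpow_neg_inv {x y : ℝ} (hu : u ≠ 0) (hx : 0 < x) (hy : 0 < y)
    (hQ : 0 < c₀ * x ^ 2 + c₁ * x * y + c₂ * y ^ 2) :
    x * firstIntegral c₀ c₁ c₂ u v x y ^ (-(1 / u)) =
      y ^ (-(v / u)) * (c₀ * x ^ 2 + c₁ * x * y + c₂ * y ^ 2) ^ (-(1 / u)) := by
  unfold firstIntegral
  have hxu : u * -(1 / u) = -1 := by field_simp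
  have hyv : v * -(1 / u) = -(v / u) := by ring
  rw [Real.mul_rpow (by positivity) hQ.le, Real.mul_rpow (by positivity) (by positivity),
    ← Real.rpow_mul hx.le, ← Real.rpow_mul hy.le, hxu, hyv, Real.rpow_neg_one]
  field_simp

lemma mul_rpow_eq_of_eq_firstIntegral_rpow_mul {e β ξ η S T : ℝ} (hc₀ : 0 < c₀)
    (hdisc : c₁ ^ 2 < 4 * c₀ * c₂) (hu : u ≠ 0) (heβ : e * β = 1 / u) (hξ : 0 < ξ) (hη : 0 < η)
    (hS : 0 ≤ S) (hT : T = firstIntegral c₀ c₁ c₂ u v ξ η ^ (-e) * S) :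
    ξ * T ^ β = η ^ (-(v / u)) * (c₀ * ξ ^ 2 + c₁ * ξ * η + c₂ * η ^ 2) ^ (-(1 / u)) * S ^ β := by
  have hJ := firstIntegral_pos (u := u) (v := v) hc₀ hdisc hξ hη
  rw [hT, Real.mul_rpow (Real.rpow_nonneg hJ.le _) hS, ← Real.rpow_mul hJ.le, neg_mul, heβ,
    ← mul_assoc, mul_firstIntegral_rpow_neg_inv hu hξ hη (quadForm_pos hc₀ hdisc hη)]

/-- Eliminating `x` on a level set `firstIntegral … x y = h`: with `z = y / x`, the reciprocal of
`z (c₀ x² + c₁ x y + c₂ y²) = -dz/dt` is `h ^ (-2 / (u + v + 2))` times a function of `z` alone. -/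
lemma slope_mul_quadForm_mul_rpow_eq_one (hc₀ : 0 < c₀) (hdisc : c₁ ^ 2 < 4 * c₀ * c₂)
    (hσ : u + v + 2 ≠ 0) {x y : ℝ} (hx : 0 < x) (hy : 0 < y) :
    y / x * (c₀ * x ^ 2 + c₁ * x * y + c₂ * y ^ 2) *
      (firstIntegral c₀ c₁ c₂ u v x y ^ (-(2 / (u + v + 2))) *
        ((y / x) ^ (2 * v / (u + v + 2) - 1) *
          (c₀ + c₁ * (y / x) + c₂ * (y / x) ^ 2) ^ (2 / (u + v + 2) - 1))) = 1 := by
  have hW := quadPoly_pos hc₀ hdisc (y / x)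
  have hinv := inv_mul_sq_mul_eq_rpow hx (div_pos hy hx) hW hσ
    (firstIntegral_eq_rpow_mul_slope hx hy).symm
  have hQ : c₀ * x ^ 2 + c₁ * x * y + c₂ * y ^ 2 =
      x ^ 2 * (c₀ + c₁ * (y / x) + c₂ * (y / x) ^ 2) := by
    field_simp
  rw [← mul_assoc (_ ^ _), ← hinv, hQ, ← mul_assoc, mul_inv_cancel₀ (by positivity)]

/-- `c₀ X² + c₁ X Y + c₂ Y²` times the derivative of `log (firstIntegral …)` along the vector
field at `(X, Y)`. -/
lemma firstIntegral_polynomial_identity (hc₀ : c₀ = a₀ + b₀) (hc₁ : c₁ = a₁ + b₁)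
    (hc₂ : c₂ = a₂ + b₂) (hΔdef : Δ = a₂ * b₀ - a₀ * b₂) (hΔ : Δ ≠ 0)
    (hu : u = 2 * b₂ * c₀ / Δ) (hv : v = 2 * a₀ * c₂ / Δ) (hL : b₁ * (v + 1) = a₁ * (u + 1))
    (X Y : ℝ) :
    u * ((a₀ * X ^ 2 + a₁ * X * Y + a₂ * Y ^ 2) * (c₀ * X ^ 2 + c₁ * X * Y + c₂ * Y ^ 2))
      - v * ((b₀ * X ^ 2 + b₁ * X * Y + b₂ * Y ^ 2) * (c₀ * X ^ 2 + c₁ * X * Y + c₂ * Y ^ 2))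
      + X * (a₀ * X ^ 2 + a₁ * X * Y + a₂ * Y ^ 2) * (2 * c₀ * X + c₁ * Y)
      - Y * (b₀ * X ^ 2 + b₁ * X * Y + b₂ * Y ^ 2) * (c₁ * X + 2 * c₂ * Y) = 0 := by
  have huΔ : u * Δ = 2 * b₂ * c₀ := by rw [hu, div_mul_cancel₀ _ hΔ]
  have hvΔ : v * Δ = 2 * a₀ * c₂ := by rw [hv, div_mul_cancel₀ _ hΔ]
  have hLΔ : b₁ * (2 * a₀ * c₂ + Δ) = a₁ * (2 * b₂ * c₀ + Δ) := by
    rw [← huΔ, ← hvΔ]; linear_combination Δ * hL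
  refine (mul_eq_zero.1 (?_ : Δ * _ = 0)).resolve_left hΔ
  subst hc₀ hc₁ hc₂ hΔdef
  linear_combination
    ((a₀ * X ^ 2 + a₁ * X * Y + a₂ * Y ^ 2) *
      ((a₀ + b₀) * X ^ 2 + (a₁ + b₁) * X * Y + (a₂ + b₂) * Y ^ 2)) * huΔ
    - ((b₀ * X ^ 2 + b₁ * X * Y + b₂ * Y ^ 2) *
      ((a₀ + b₀) * X ^ 2 + (a₁ + b₁) * X * Y + (a₂ + b₂) * Y ^ 2)) * hvΔ
    - (X * Y * ((a₀ + b₀) * X ^ 2 + (a₁ + b₁) * X * Y + (a₂ + b₂) * Y ^ 2)) * hLΔ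

lemma hasDerivAt_firstIntegral_comp {x y : ℝ → ℝ} {t : ℝ} (hc₀ : c₀ = a₀ + b₀)
    (hc₁ : c₁ = a₁ + b₁) (hc₂ : c₂ = a₂ + b₂) (hΔdef : Δ = a₂ * b₀ - a₀ * b₂) (hΔ : Δ ≠ 0)
    (hu : u = 2 * b₂ * c₀ / Δ) (hv : v = 2 * a₀ * c₂ / Δ) (hL : b₁ * (v + 1) = a₁ * (u + 1))
    (hx : 0 < x t) (hy : 0 < y t)
    (hdx : HasDerivAt x (x t * (a₀ * x t ^ 2 + a₁ * x t * y t + a₂ * y t ^ 2)) t)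
    (hdy : HasDerivAt y (-(y t * (b₀ * x t ^ 2 + b₁ * x t * y t + b₂ * y t ^ 2))) t) :
    HasDerivAt (fun s => firstIntegral c₀ c₁ c₂ u v (x s) (y s)) 0 t := by
  have hQ := ((((hdx.fun_pow 2).const_mul c₀).add ((hdx.const_mul c₁).mul hdy)).add
    ((hdy.fun_pow 2).const_mul c₂))
  have H := ((hdx.rpow_const (p := u) (Or.inl hx.ne')).mul
    (hdy.rpow_const (p := v) (Or.inl hy.ne'))).mul hQ
  have hxu : x t ^ u = x t ^ (u - 1) * x t := by rw [Real.rpow_sub_one hx.ne']; field_simp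
  have hyv : y t ^ v = y t ^ (v - 1) * y t := by rw [Real.rpow_sub_one hy.ne']; field_simp
  refine H.congr_deriv ?_
  simp only [Pi.mul_apply, Pi.add_apply, Nat.cast_ofNat]
  norm_num only
  rw [hxu, hyv]
  linear_combination (x t ^ (u - 1) * y t ^ (v - 1) * x t * y t) *
    firstIntegral_polynomial_identity hc₀ hc₁ hc₂ hΔdef hΔ hu hv hL (x t) (y t)

lemma hasDerivAt_div_of_cubicField {x y : ℝ → ℝ} {t : ℝ} (hc₀ : c₀ = a₀ + b₀)
    (hc₁ : c₁ = a₁ + b₁) (hc₂ : c₂ = a₂ + b₂) (hx : x t ≠ 0)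
    (hdx : HasDerivAt x (x t * (a₀ * x t ^ 2 + a₁ * x t * y t + a₂ * y t ^ 2)) t)
    (hdy : HasDerivAt y (-(y t * (b₀ * x t ^ 2 + b₁ * x t * y t + b₂ * y t ^ 2))) t) :
    HasDerivAt (fun s => y s / x s)
      (-(y t / x t * (c₀ * x t ^ 2 + c₁ * x t * y t + c₂ * y t ^ 2))) t := by
  refine (hdy.div hdx hx).congr_deriv ?_
  subst hc₀ hc₁ hc₂
  field_simp
  ring

end CubicField

theorem DulacAdmissible.time_eq {a₀ a₁ a₂ b₀ b₁ b₂ c₀ c₁ c₂ Δ u v ζ₀ η T ξ ω : ℝ}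
    (hc₀ : c₀ = a₀ + b₀) (hc₁ : c₁ = a₁ + b₁) (hc₂ : c₂ = a₂ + b₂)
    (hΔdef : Δ = a₂ * b₀ - a₀ * b₂) (hΔ : Δ ≠ 0)
    (hu : u = 2 * b₂ * c₀ / Δ) (hv : v = 2 * a₀ * c₂ / Δ) (hL : b₁ * (v + 1) = a₁ * (u + 1))
    (hc₀pos : 0 < c₀) (hdisc : c₁ ^ 2 < 4 * c₀ * c₂) (hσ : u + v + 2 ≠ 0) (hT : 0 ≤ T)
    (hadm : DulacAdmissible a₀ a₁ a₂ b₀ b₁ b₂ ζ₀ η T ξ ω) :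
    firstIntegral c₀ c₁ c₂ u v ζ₀ ω = firstIntegral c₀ c₁ c₂ u v ξ η ∧
      T = firstIntegral c₀ c₁ c₂ u v ξ η ^ (-(2 / (u + v + 2))) *
        ∫ M in Ioc (ω / ζ₀) (η / ξ),
          M ^ (2 * v / (u + v + 2) - 1) * (c₀ + c₁ * M + c₂ * M ^ 2) ^ (2 / (u + v + 2) - 1) := by
  obtain ⟨-, -, x, y, hpos, hd, rfl, rfl, rfl, rfl⟩ := hadm
  have hJ : ∀ t ∈ Icc 0 T, firstIntegral c₀ c₁ c₂ u v (x t) (y t) =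
      firstIntegral c₀ c₁ c₂ u v (x 0) (y 0) := by
    have hJ' t (ht : t ∈ Icc 0 T) := hasDerivAt_firstIntegral_comp (u := u) (v := v)
      hc₀ hc₁ hc₂ hΔdef hΔ hu hv hL (hpos t ht).1 (hpos t ht).2 (hd t ht).1 (hd t ht).2
    exact constant_of_has_deriv_right_zero (fun t ht => (hJ' t ht).continuousAt.continuousWithinAt)
      fun t ht => (hJ' t (Ico_subset_Icc_self ht)).hasDerivWithinAt
  have hz t (ht : t ∈ Icc 0 T) := hasDerivAt_div_of_cubicField hc₀ hc₁ hc₂ (hpos t ht).1.ne'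
    (hd t ht).1 (hd t ht).2
  have hanti : y T / x T ≤ y 0 / x 0 := by
    refine antitoneOn_of_hasDerivWithinAt_nonpos (convex_Icc 0 T)
      (fun t ht => (hz t ht).continuousAt.continuousWithinAt)
      (fun t ht => (hz t (interior_subset ht)).hasDerivWithinAt) (fun t ht => ?_)
      ⟨le_rfl, hT⟩ ⟨hT, le_rfl⟩ hT
    obtain ⟨hx, hy⟩ := hpos t (interior_subset ht)
    have := quadForm_pos hc₀pos hdisc (x := x t) hy
    rw [neg_nonpos]
    positivity
  have htime := eq_intervalIntegral_of_hasDerivAt_mul_eq_neg_one hT hz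
    (g := fun M => firstIntegral c₀ c₁ c₂ u v (x 0) (y 0) ^ (-(2 / (u + v + 2))) *
      (M ^ (2 * v / (u + v + 2) - 1) * (c₀ + c₁ * M + c₂ * M ^ 2) ^ (2 / (u + v + 2) - 1)))
    (continuousOn_const.mul ((continuousOn_rpow_mul_quadPoly_rpow hc₀pos hdisc _ _).mono
      (by rintro _ ⟨t, ht, rfl⟩; exact div_pos (hpos t ht).2 (hpos t ht).1)))
    (fun t ht => by
      rw [← hJ t ht, neg_mul, slope_mul_quadForm_mul_rpow_eq_one hc₀pos hdisc hσ
        (hpos t ht).1 (hpos t ht).2])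
  refine ⟨hJ T ⟨hT, le_rfl⟩, htime.trans ?_⟩
  rw [intervalIntegral.integral_of_le hanti, integral_const_mul]

theorem tendsto_mul_rpow_of_time_eq {ι : Type*} {l : Filter ι} [l.IsCountablyGenerated]
    {c₀ c₁ c₂ u v e β ζ₀ η : ℝ} {Φ : ℝ → ℝ} {T ξ ω : ι → ℝ}
    (hc₀ : 0 < c₀) (hdisc : c₁ ^ 2 < 4 * c₀ * c₂) (hu : 0 < u) (hv : 0 < v) (he : 0 < e)
    (heβ : e * β = 1 / u) (hζ₀ : 0 < ζ₀) (hη : 0 < η)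
    (hΦ : IntegrableOn Φ (Ioi 0)) (hΦ₀ : ∀ M ∈ Ioi 0, 0 ≤ Φ M) (hT : Tendsto T l atTop)
    (htraj : ∀ᶠ i in l, 0 < ξ i ∧ 0 < ω i ∧
      firstIntegral c₀ c₁ c₂ u v ζ₀ (ω i) = firstIntegral c₀ c₁ c₂ u v (ξ i) η ∧
      T i = firstIntegral c₀ c₁ c₂ u v (ξ i) η ^ (-e) * ∫ M in Ioc (ω i / ζ₀) (η / ξ i), Φ M) :
    Tendsto (fun i => ξ i * T i ^ β) l
      (𝓝 (η ^ (-(v / u)) * (c₂ * η ^ 2) ^ (-(1 / u)) * (∫ M in Ioi 0, Φ M) ^ β)) := by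
  have hc₂ := pos_of_discrim_neg hc₀ hdisc
  have hβ : 0 < β := pos_of_mul_pos_right (heβ ▸ by positivity) he.le
  set I := ∫ M in Ioi 0, Φ M
  set h := fun i => firstIntegral c₀ c₁ c₂ u v (ξ i) η
  set S := fun i => ∫ M in Ioc (ω i / ζ₀) (η / ξ i), Φ M
  have hS_nonneg {i} (hω : 0 < ω i) : 0 ≤ S i :=
    setIntegral_nonneg measurableSet_Ioc fun M hM => hΦ₀ M ((div_pos hω hζ₀).trans hM.1)
  have hS_le {i} (hω : 0 < ω i) : S i ≤ I :=
    setIntegral_mono_set hΦ ((ae_restrict_mem measurableSet_Ioi).mono hΦ₀)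
      (Ioc_subset_Ioi_self.trans (Ioi_subset_Ioi (div_pos hω hζ₀).le)).eventuallyLE
  have hh : Tendsto h l (𝓝 0) := by
    refine tendsto_nhds_zero_of_rpow_le he (hT.const_div_atTop I) ?_
    filter_upwards [htraj, hT.eventually_gt_atTop 0] with i hi hT₀
    obtain ⟨hξ, hω, -, hTi⟩ := hi
    have hhi : 0 < h i := firstIntegral_pos hc₀ hdisc hξ hη
    refine ⟨hhi.le, (le_div_iff₀ hT₀).2 ?_⟩
    rw [hTi, ← mul_assoc, ← Real.rpow_add hhi, add_neg_cancel, Real.rpow_zero, one_mul]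
    exact hS_le hω
  have hξ : Tendsto ξ l (𝓝 0) :=
    tendsto_nhds_zero_of_firstIntegral_left hc₀ hdisc hu hη (htraj.mono fun i hi => hi.1) hh
  have hω : Tendsto ω l (𝓝 0) :=
    tendsto_nhds_zero_of_firstIntegral_right hc₀ hdisc hv hζ₀ (htraj.mono fun i hi => hi.2.1)
      (hh.congr' (htraj.mono fun i hi => hi.2.2.1.symm))
  have hS : Tendsto S l (𝓝 I) := by
    refine tendsto_setIntegral_Ioc_of_tendsto hΦ (by simpa using hω.div_const ζ₀)
      (htraj.mono fun i hi => (div_pos hi.2.1 hζ₀).le) ?_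
    have hξ' : Tendsto ξ l (𝓝[>] 0) := tendsto_nhdsWithin_iff.2 ⟨hξ, htraj.mono fun i hi => hi.1⟩
    simpa only [div_eq_mul_inv, Pi.inv_apply] using hξ'.inv_tendsto_nhdsGT_zero.const_mul_atTop hη
  have hQ : Tendsto (fun i => c₀ * ξ i ^ 2 + c₁ * ξ i * η + c₂ * η ^ 2) l (𝓝 (c₂ * η ^ 2)) :=
    ((by fun_prop : Continuous fun x : ℝ => c₀ * x ^ 2 + c₁ * x * η + c₂ * η ^ 2).tendsto'
      0 _ (by ring)).comp hξ
  refine ((tendsto_const_nhds.mul (hQ.rpow_const (Or.inl (by positivity)))).mul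
    (hS.rpow_const (Or.inr hβ.le))).congr' (htraj.mono fun i ⟨hξ, hω, _, hTi⟩ =>
      (mul_rpow_eq_of_eq_firstIntegral_rpow_mul hc₀ hdisc hu.ne' heβ hξ hη (hS_nonneg hω) hTi).symm)

lemma dulac_exponents {a₀ a₂ b₀ b₂ c₀ c₂ Δ u v β₀ β₂ : ℝ}
    (hb₂ : 0 < b₂) (hc₀pos : 0 < c₀) (hc₂pos : 0 < c₂)
    (hc₀ : c₀ = a₀ + b₀) (hc₂ : c₂ = a₂ + b₂) (hΔdef : Δ = a₂ * b₀ - a₀ * b₂) (hΔ : Δ ≠ 0)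
    (hu : u = 2 * b₂ * c₀ / Δ) (hv : v = 2 * a₀ * c₂ / Δ)
    (hβ₀ : β₀ = (a₀ + b₀) / (2 * a₀)) (hβ₂ : β₂ = (a₂ + b₂) / (2 * b₂)) :
    2 * v / (u + v + 2) - 1 = 1 / β₀ - 1 ∧
      2 / (u + v + 2) - 1 = -(1 / (2 * β₀) + 1 / (2 * β₂)) ∧
      2 / (u + v + 2) * β₂ = 1 / u ∧ (v + 2) / u = a₂ / b₂ := by
  have hσ : u + v + 2 = 2 * c₀ * c₂ / Δ := by
    rw [hu, hv]; field_simp; rw [hΔdef, hc₀, hc₂]; ring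
  rw [← hc₀] at hβ₀
  rw [← hc₂] at hβ₂
  subst hu hv hβ₀ hβ₂
  rw [hσ]
  refine ⟨by field_simp, ?_, by field_simp, ?_⟩
  · field_simp
    rw [hΔdef, hc₀, hc₂]
    ring
  · field_simp
    rw [hΔdef, hc₀, hc₂]
    ring

lemma rpow_neg_div_mul_mul_sq_rpow {c η u v : ℝ} (hc : 0 < c) (hη : 0 < η) :
    η ^ (-(v / u)) * (c * η ^ 2) ^ (-(1 / u)) = c ^ (-(1 / u)) * η ^ (-((v + 2) / u)) := by
  rw [Real.mul_rpow hc.le (by positivity), ← Real.rpow_natCast, ← Real.rpow_mul hη.le,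
    mul_left_comm, ← Real.rpow_add hη]
  congr 2
  push_cast
  ring

theorem dulac_incoming_asymptotics_general
    (a₀ a₁ a₂ b₀ b₁ b₂ : ℝ)
    (ha₀ : 0 < a₀) (hb₀ : 0 < b₀) (hb₂ : 0 < b₂)
    (c₀ c₁ c₂ Δ u v β₀ β₂ : ℝ)
    (hc₀ : c₀ = a₀ + b₀) (hc₁ : c₁ = a₁ + b₁) (hc₂ : c₂ = a₂ + b₂)
    (hΔdef : Δ = a₂ * b₀ - a₀ * b₂) (hΔ : 0 < Δ)
    (hdisc : c₁ ^ 2 < 4 * c₀ * c₂)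
    (hu : u = 2 * b₂ * c₀ / Δ) (hv : v = 2 * a₀ * c₂ / Δ)
    (hβ₀ : β₀ = (a₀ + b₀) / (2 * a₀)) (hβ₂ : β₂ = (a₂ + b₂) / (2 * b₂))
    (hcondL : b₁ * (v + 1) = a₁ * (u + 1))
    (ζ₀ η : ℝ) (hζ₀ : 0 < ζ₀) (hη : 0 < η)
    (ξ₀ : ℝ)
    (hξ₀ : ξ₀ = c₂ ^ (-(1 / u)) * η ^ (-(a₂ / b₂)) *
      (∫ M in Set.Ioi (0 : ℝ),
        M ^ (1 / β₀ - 1) *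
          (c₀ + c₁ * M + c₂ * M ^ 2) ^ (-(1 / (2 * β₀) + 1 / (2 * β₂)))) ^ β₂) :
    ∀ ε > 0, ∃ T₀ > 0, ∀ T ≥ T₀, ∀ ξ ω : ℝ,
      DulacAdmissible a₀ a₁ a₂ b₀ b₁ b₂ ζ₀ η T ξ ω →
      |ξ * T ^ β₂ - ξ₀| < ε := by
  have hc₀p : 0 < c₀ := hc₀ ▸ add_pos ha₀ hb₀
  have hc₂p : 0 < c₂ := pos_of_discrim_neg hc₀p hdisc
  have hup : 0 < u := hu ▸ by positivity
  have hvp : 0 < v := hv ▸ by positivity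
  have hβ₀p : 0 < β₀ := hβ₀ ▸ by positivity
  have hβ₂p : 0 < β₂ := hβ₂ ▸ hc₂ ▸ by positivity
  obtain ⟨hp, hq, heβ, hvu⟩ :=
    dulac_exponents hb₂ hc₀p hc₂p hc₀ hc₂ hΔdef hΔ.ne' hu hv hβ₀ hβ₂
  have hΦ := integrableOn_rpow_mul_quadPoly_rpow hc₀p hdisc
    (p := 1 / β₀ - 1) (q := -(1 / (2 * β₀) + 1 / (2 * β₂))) (by simp [hβ₀p])
    (by simp only [neg_nonpos]; positivity) (by field_simp; linarith)
  set l := comap (fun p : ℝ × ℝ × ℝ => p.1) atTop ⊓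
    𝓟 {p | DulacAdmissible a₀ a₁ a₂ b₀ b₁ b₂ ζ₀ η p.1 p.2.1 p.2.2}
  have hT : Tendsto (fun p : ℝ × ℝ × ℝ => p.1) l atTop := tendsto_comap.mono_left inf_le_left
  have hlim : Tendsto (fun p : ℝ × ℝ × ℝ => p.2.1 * p.1 ^ β₂) l (𝓝 ξ₀) := by
    have := tendsto_mul_rpow_of_time_eq (ξ := fun p => p.2.1) (ω := fun p => p.2.2)
      hc₀p hdisc hup hvp (by positivity) heβ hζ₀ hη hΦ
      (fun M hM => (mul_pos (Real.rpow_pos_of_pos hM _)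
        (Real.rpow_pos_of_pos (quadPoly_pos hc₀p hdisc M) _)).le) hT ?_
    · rwa [rpow_neg_div_mul_mul_sq_rpow hc₂p hη, hvu, ← hξ₀] at this
    filter_upwards [mem_inf_of_right (mem_principal_self _), hT.eventually_ge_atTop 0]
      with p hadm hT₀
    obtain ⟨hJ, hTeq⟩ := hadm.time_eq hc₀ hc₁ hc₂ hΔdef hΔ.ne' hu hv hcondL hc₀p hdisc
      (by positivity) hT₀
    rw [hp, hq] at hTeq
    exact ⟨hadm.1, hadm.2.1, hJ, hTeq⟩
  intro ε hε
  obtain ⟨T₀, -, hT₀⟩ := ((atTop_basis.comap _).inf_principal _).eventually_iff.1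
    (Metric.tendsto_nhds.1 hlim ε hε)
  exact ⟨max T₀ 1, by positivity, fun T hT ξ ω hadm => by
    simpa [Real.dist_eq] using hT₀ (x := (T, ξ, ω)) ⟨le_of_max_le_left hT, hadm⟩⟩

/-- (Dulac exit point asymptotics, incoming coordinate.)
For `Δ > 0` with (condL): `ξ · T^{β₂} → ξ₀(η) = c₂^{−1/u} η^{−a₂/b₂} (∫₀^∞ Φ)^{β₂}`
as `T → ∞`, uniformly over admissible pairs. -/
theorem dulac_incoming_asymptotics
    (a₀ a₁ a₂ b₀ b₁ b₂ : ℝ)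
    (ha₀ : 0 < a₀) (ha₂ : 0 < a₂) (hb₀ : 0 < b₀) (hb₂ : 0 < b₂)
    (c₀ c₁ c₂ Δ u v β₀ β₂ : ℝ)
    (hc₀ : c₀ = a₀ + b₀) (hc₁ : c₁ = a₁ + b₁) (hc₂ : c₂ = a₂ + b₂)
    (hΔdef : Δ = a₂ * b₀ - a₀ * b₂) (hΔ : 0 < Δ)
    (hdisc : c₁ ^ 2 < 4 * c₀ * c₂)
    (hu : u = 2 * b₂ * c₀ / Δ) (hv : v = 2 * a₀ * c₂ / Δ)
    (hβ₀ : β₀ = (a₀ + b₀) / (2 * a₀)) (hβ₂ : β₂ = (a₂ + b₂) / (2 * b₂))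
    (hcondL : b₁ * (v + 1) = a₁ * (u + 1))
    (ζ₀ η : ℝ) (hζ₀ : 0 < ζ₀) (hη : 0 < η)
    (ξ₀ : ℝ)
    (hξ₀ : ξ₀ = c₂ ^ (-(1 / u)) * η ^ (-(a₂ / b₂)) *
      (∫ M in Set.Ioi (0 : ℝ),
        M ^ (1 / β₀ - 1) *
          (c₀ + c₁ * M + c₂ * M ^ 2) ^ (-(1 / (2 * β₀) + 1 / (2 * β₂)))) ^ β₂) :
    ∀ ε > 0, ∃ T₀ > 0, ∀ T ≥ T₀, ∀ ξ ω : ℝ,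
      DulacAdmissible a₀ a₁ a₂ b₀ b₁ b₂ ζ₀ η T ξ ω →
      |ξ * T ^ β₂ - ξ₀| < ε :=
  dulac_incoming_asymptotics_general a₀ a₁ a₂ b₀ b₁ b₂ ha₀ hb₀ hb₂ c₀ c₁ c₂ Δ u v β₀ β₂ hc₀ hc₁ hc₂
    hΔdef hΔ hdisc hu hv hβ₀ hβ₂ hcondL ζ₀ η hζ₀ hη ξ₀ hξ₀
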